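/- Let $\chi$ be a nonnegative Borel measure on $[0,\infty)$ and $\mathsf{q}(x) = \chi([0,x))$. Then $\sup_{x>0}\, x\,\chi([x,\infty)) < \infty$ if and only if there exists $c \in [0,\infty)$ with $\sup_{x>0}\, x \int_x^\infty |\mathsf{q}(t) - c|^2\,dt < \infty$. -/

import Mathlib

open MeasureTheory Filter Set Topology

/-!
Write `M = μ [0, ∞)`. Since `μ (-∞, 0) = 0`, `q t + μ [t, ∞) = M` for `t ≥ 0`, so once `M < ∞` the
deviation `|q t - M| = μ [t, ∞)` is a nonincreasing tail.

If `x μ [x, ∞) ≤ C`, then `M < ∞` and `|q t - M|² ≤ C² / t²`, whose integral over `(x, ∞)` is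
`C² / x`. Conversely, if `|q - c|²` is integrable at infinity, the monotone function `q` must
converge to `c`, so `M = c`; as the tail is nonincreasing, `|q - c|² ≥ μ [x, ∞)²` on `(x/2, x)`,
whence `(x/2)² μ [x, ∞)² ≤ (x/2) ∫_{x/2}^∞ |q - c|² ≤ C`.
-/

lemma not_integrableOn_Ioi_of_eventually_le {f : ℝ → ℝ} {ε a : ℝ} (hε : 0 < ε)
    (hf : ∀ᶠ t in atTop, ε ≤ f t) : ¬ IntegrableOn f (Ioi a) := by
  intro hi
  obtain ⟨n, hn⟩ := eventually_atTop.1 hf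
  have hsub : Ioi (max n a) ⊆ {t | ε ≤ f t} ∩ Ioi a := fun t ht =>
    ⟨hn t (le_max_left n a |>.trans ht.le), (le_max_right n a).trans_lt ht⟩
  have hfin := hi.measure_ge_lt_top hε
  rw [Measure.restrict_apply' measurableSet_Ioi] at hfin
  simpa using (measure_mono hsub).trans_lt hfin

lemma Monotone.eventually_le_abs_sub_of_not_tendsto {g : ℝ → ℝ} {c : ℝ} (hg : Monotone g)
    (h : ¬ Tendsto g atTop (𝓝 c)) : ∃ ε > 0, ∀ᶠ t in atTop, ε ≤ |g t - c| := by
  rw [Metric.tendsto_atTop] at h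
  push Not at h
  obtain ⟨ε, hε, hfreq⟩ := h
  refine ⟨ε, hε, ?_⟩
  by_cases hup : ∃ s, c + ε ≤ g s
  · obtain ⟨s, hs⟩ := hup
    filter_upwards [eventually_ge_atTop s] with t ht
    exact le_abs.2 (Or.inl (by linarith [hg ht]))
  · push Not at hup
    refine Eventually.of_forall fun t => ?_
    obtain ⟨s, hts, hs⟩ := hfreq t
    rw [Real.dist_eq] at hs
    have hsc : g s ≤ c - ε := by cases abs_cases (g s - c) <;> linarith [hup s]
    exact le_abs.2 (Or.inr (by linarith [hg hts]))

lemma Monotone.tendsto_of_integrableOn_sq_abs_sub {g : ℝ → ℝ} {c a : ℝ} (hg : Monotone g)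
    (hi : IntegrableOn (fun t => |g t - c| ^ 2) (Ioi a)) : Tendsto g atTop (𝓝 c) := by
  by_contra h
  obtain ⟨ε, hε, hev⟩ := hg.eventually_le_abs_sub_of_not_tendsto h
  exact not_integrableOn_Ioi_of_eventually_le (pow_pos hε 2)
    (hev.mono fun t ht => pow_le_pow_left₀ hε.le ht 2) hi

lemma div_sq_eq_mul_rpow_neg_two (K t : ℝ) : K / t ^ 2 = K * t ^ (-2 : ℝ) := by
  rw [Real.rpow_neg_ofNat, zpow_neg, zpow_ofNat, div_eq_mul_inv]

lemma integrableOn_Ioi_of_norm_le_div_sq {f : ℝ → ℝ} {K x : ℝ} (hx : 0 < x)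
    (hf : AEStronglyMeasurable f (volume.restrict (Ioi x)))
    (hle : ∀ t ∈ Ioi x, ‖f t‖ ≤ K / t ^ 2) : IntegrableOn f (Ioi x) := by
  refine ((integrableOn_Ioi_rpow_of_lt (by norm_num : (-2 : ℝ) < -1) hx).const_mul K).mono' hf ?_
  filter_upwards [ae_restrict_mem measurableSet_Ioi] with t ht
  rw [← div_sq_eq_mul_rpow_neg_two]
  exact hle t ht

lemma setIntegral_Ioi_le_of_le_div_sq {f : ℝ → ℝ} {K x : ℝ} (hx : 0 < x)
    (hf : IntegrableOn f (Ioi x)) (hle : ∀ t ∈ Ioi x, f t ≤ K / t ^ 2) :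
    ∫ t in Ioi x, f t ≤ K / x := by
  have hg := (integrableOn_Ioi_rpow_of_lt (by norm_num : (-2 : ℝ) < -1) hx).const_mul K
  calc ∫ t in Ioi x, f t ≤ ∫ t in Ioi x, K * t ^ (-2 : ℝ) :=
        setIntegral_mono_on hf hg measurableSet_Ioi fun t ht => by
          rw [← div_sq_eq_mul_rpow_neg_two]; exact hle t ht
    _ = K / x := by
      rw [integral_const_mul, integral_Ioi_rpow_of_lt (by norm_num) hx]
      norm_num [Real.rpow_neg_one, div_eq_mul_inv]

lemma mul_sub_le_setIntegral_Ioi {f : ℝ → ℝ} {a b r : ℝ} (hab : a ≤ b)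
    (hf : IntegrableOn f (Ioi a)) (hf0 : ∀ t ∈ Ioi a, 0 ≤ f t) (hr : ∀ t ∈ Ioo a b, r ≤ f t) :
    r * (b - a) ≤ ∫ t in Ioi a, f t :=
  calc r * (b - a) = r * volume.real (Ioo a b) := by simp [hab]
    _ ≤ ∫ t in Ioo a b, f t :=
      setIntegral_ge_of_const_le_real measurableSet_Ioo measure_Ioo_lt_top.ne hr
        (hf.mono_set Ioo_subset_Ioi_self)
    _ ≤ ∫ t in Ioi a, f t :=
      setIntegral_mono_set hf (ae_restrict_of_forall_mem measurableSet_Ioi hf0)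
        Ioo_subset_Ioi_self.eventuallyLE

lemma ENNReal.toReal_le_div_of_ofReal_mul_le {a : ENNReal} {x C : ℝ} (hx : 0 < x) (hC : 0 ≤ C)
    (h : ENNReal.ofReal x * a ≤ ENNReal.ofReal C) : a.toReal ≤ C / x := by
  rw [le_div_iff₀' hx]
  simpa [ENNReal.toReal_mul, hx.le] using ENNReal.toReal_le_of_le_ofReal hC h

section

variable {μ : Measure ℝ}

lemma measure_Ici_zero_of_measure_Iio_zero (hneg : μ (Iio 0) = 0) : μ (Ici 0) = μ univ :=
  measure_congr (ae_eq_univ.2 (by rwa [compl_Ici]))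

lemma measure_Ico_zero_add_measure_Ici (hneg : μ (Iio 0) = 0) {t : ℝ} (ht : 0 ≤ t) :
    μ (Ico 0 t) + μ (Ici t) = μ univ := by
  rw [← measure_union (Iio_disjoint_Ici le_rfl |>.mono_left Ico_subset_Iio_self)
    measurableSet_Ici, Ico_union_Ici_eq_Ici ht, measure_Ici_zero_of_measure_Iio_zero hneg]

lemma tendsto_measure_Ico_zero_atTop (hneg : μ (Iio 0) = 0) :
    Tendsto (fun t => μ (Ico 0 t)) atTop (𝓝 (μ univ)) := by
  have := tendsto_measure_iUnion_atTop (μ := μ) (s := fun t : ℝ => Ico 0 t)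
    fun _ _ hst => Ico_subset_Ico_right hst
  rwa [iUnion_Ico_right, measure_Ici_zero_of_measure_Iio_zero hneg] at this

lemma monotone_toReal_measure_Ico_zero (hlocfin : ∀ x : ℝ, μ (Ico 0 x) < ⊤) :
    Monotone fun t => (μ (Ico 0 t)).toReal := fun _ t hst =>
  ENNReal.toReal_mono (hlocfin t).ne (measure_mono (Ico_subset_Ico_right hst))

lemma abs_toReal_measure_Ico_zero_sub [IsFiniteMeasure μ] (hneg : μ (Iio 0) = 0) {t : ℝ}
    (ht : 0 ≤ t) : |(μ (Ico 0 t)).toReal - (μ univ).toReal| = (μ (Ici t)).toReal := by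
  rw [← measure_Ico_zero_add_measure_Ici hneg ht,
    ENNReal.toReal_add (measure_ne_top _ _) (measure_ne_top _ _), sub_add_cancel_left, abs_neg,
    abs_of_nonneg ENNReal.toReal_nonneg]

lemma measure_univ_eq_ofReal_of_integrableOn_sq (hneg : μ (Iio 0) = 0)
    (hlocfin : ∀ x : ℝ, μ (Ico 0 x) < ⊤) {a c : ℝ}
    (hi : IntegrableOn (fun t => |(μ (Ico 0 t)).toReal - c| ^ 2) (Ioi a)) :
    μ univ = ENNReal.ofReal c := by
  refine tendsto_nhds_unique (tendsto_measure_Ico_zero_atTop hneg) ?_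
  have hq := (monotone_toReal_measure_Ico_zero hlocfin).tendsto_of_integrableOn_sq_abs_sub hi
  refine ((ENNReal.continuous_ofReal.tendsto c).comp hq).congr fun t => ?_
  exact ENNReal.ofReal_toReal (hlocfin t).ne

lemma integrableOn_and_mul_integral_le_of_mul_measure_Ici_le (hneg : μ (Iio 0) = 0)
    (hlocfin : ∀ x : ℝ, μ (Ico 0 x) < ⊤) {C : ℝ}
    (hC : ∀ x : ℝ, 0 < x → ENNReal.ofReal x * μ (Ici x) ≤ ENNReal.ofReal C) (x : ℝ) (hx : 0 < x) :
    IntegrableOn (fun t => |(μ (Ico 0 t)).toReal - (μ univ).toReal| ^ 2) (Ioi x) ∧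
      x * ∫ t in Ioi x, |(μ (Ico 0 t)).toReal - (μ univ).toReal| ^ 2 ≤ max C 0 ^ 2 := by
  have : IsFiniteMeasure μ := ⟨by
    rw [← measure_Ico_zero_add_measure_Ici hneg zero_le_one]
    refine ENNReal.add_lt_top.2 ⟨hlocfin 1, ?_⟩
    simpa using (hC 1 one_pos).trans_lt ENNReal.ofReal_lt_top⟩
  have hle : ∀ t ∈ Ioi x,
      ‖|(μ (Ico 0 t)).toReal - (μ univ).toReal| ^ 2‖ ≤ max C 0 ^ 2 / t ^ 2 := fun t ht => by
    have ht0 : 0 < t := hx.trans ht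
    rw [norm_pow, Real.norm_eq_abs, abs_abs, abs_toReal_measure_Ico_zero_sub hneg ht0.le,
      ← div_pow]
    refine pow_le_pow_left₀ ENNReal.toReal_nonneg ?_ 2
    exact ENNReal.toReal_le_div_of_ofReal_mul_le ht0 (le_max_right C 0)
      ((hC t ht0).trans (ENNReal.ofReal_le_ofReal (le_max_left C 0)))
  have hint := integrableOn_Ioi_of_norm_le_div_sq hx
    ((((monotone_toReal_measure_Ico_zero hlocfin).measurable.sub_const _).abs.pow_const 2)
      |>.aestronglyMeasurable) hle
  refine ⟨hint, ?_⟩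
  calc x * ∫ t in Ioi x, |(μ (Ico 0 t)).toReal - (μ univ).toReal| ^ 2
      ≤ x * (max C 0 ^ 2 / x) := by
        gcongr
        exact setIntegral_Ioi_le_of_le_div_sq hx hint fun t ht => (le_abs_self _).trans (hle t ht)
    _ = max C 0 ^ 2 := by field_simp

lemma mul_measure_Ici_le_of_integral_le (hneg : μ (Iio 0) = 0)
    (hlocfin : ∀ x : ℝ, μ (Ico 0 x) < ⊤) {c C : ℝ} (hc : 0 ≤ c)
    (hC : ∀ x : ℝ, 0 < x →
      IntegrableOn (fun t => |(μ (Ico 0 t)).toReal - c| ^ 2) (Ioi x) ∧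
        x * ∫ t in Ioi x, |(μ (Ico 0 t)).toReal - c| ^ 2 ≤ C) (y : ℝ) (hy : 0 < y) :
    ENNReal.ofReal y * μ (Ici y) ≤ ENNReal.ofReal (2 * √C) := by
  have hμ := measure_univ_eq_ofReal_of_integrableOn_sq hneg hlocfin (hC 1 one_pos).1
  have : IsFiniteMeasure μ := ⟨hμ ▸ ENNReal.ofReal_lt_top⟩
  have hcμ : c = (μ univ).toReal := by rw [hμ, ENNReal.toReal_ofReal hc]
  set r := (μ (Ici y)).toReal
  obtain ⟨hint, hbound⟩ := hC (y / 2) (by positivity)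
  have htail : ∀ t ∈ Ioo (y / 2) y, r ≤ |(μ (Ico 0 t)).toReal - c| := fun t ht => by
    rw [hcμ, abs_toReal_measure_Ico_zero_sub hneg (by linarith [ht.1])]
    exact ENNReal.toReal_mono (measure_ne_top _ _) (measure_mono (Ici_subset_Ici.2 ht.2.le))
  have hlower : r ^ 2 * (y / 2) ≤ ∫ t in Ioi (y / 2), |(μ (Ico 0 t)).toReal - c| ^ 2 :=
    calc r ^ 2 * (y / 2) = r ^ 2 * (y - y / 2) := by ring
      _ ≤ _ := mul_sub_le_setIntegral_Ioi (by linarith) hint (fun t _ => by positivity)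
        fun t ht => pow_le_pow_left₀ ENNReal.toReal_nonneg (htail t ht) 2
  have hyr : (y * r) ^ 2 ≤ (2 * √C) ^ 2 := by
    have hmul := (mul_le_mul_of_nonneg_left hlower (by positivity : 0 ≤ y / 2)).trans hbound
    rw [mul_pow 2, Real.sq_sqrt ((by positivity : 0 ≤ y / 2 * (r ^ 2 * (y / 2))).trans hmul)]
    linarith
  rw [← ENNReal.ofReal_toReal (measure_ne_top μ (Ici y)), ← ENNReal.ofReal_mul hy.le]
  exact ENNReal.ofReal_le_ofReal (abs_le_of_sq_le_sq' hyr (by positivity)).2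

end

/-- Let `χ` be a (locally finite) nonnegative Borel measure on `[0,∞)` and
`q(x) = χ([0,x))`.  Then `sup_{x>0} x χ([x,∞)) < ∞` if and only if there is a
constant `c ≥ 0` such that `sup_{x>0} x ∫_x^∞ |q(t) - c|² dt < ∞` (the tail
integrals being finite). -/
theorem stmt_8 (μ : Measure ℝ) (hneg : μ (Set.Iio (0 : ℝ)) = 0)
    (hlocfin : ∀ x : ℝ, μ (Set.Ico (0 : ℝ) x) < ⊤) :
    (∃ C : ℝ, ∀ x : ℝ, 0 < x →
        ENNReal.ofReal x * μ (Set.Ici x) ≤ ENNReal.ofReal C) ↔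
      ∃ c : ℝ, 0 ≤ c ∧ ∃ C : ℝ, ∀ x : ℝ, 0 < x →
        IntegrableOn
          (fun t : ℝ => |(μ (Set.Ico (0 : ℝ) t)).toReal - c| ^ 2)
          (Set.Ioi x) ∧
        x * ∫ t in Set.Ioi x, |(μ (Set.Ico (0 : ℝ) t)).toReal - c| ^ 2 ≤ C :=
  ⟨fun ⟨_, hC⟩ => ⟨_, ENNReal.toReal_nonneg, _,
      integrableOn_and_mul_integral_le_of_mul_measure_Ici_le hneg hlocfin hC⟩,
    fun ⟨_, hc, _, hC⟩ => ⟨_, mul_measure_Ici_le_of_integral_le hneg hlocfin hc hC⟩⟩
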